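/- Every no-instance of Dyck-2 reachability has a separator. -/
import Mathlib


/-- The four-letter alphabet of Dyck-2: two kinds of opening and closing brackets. -/
inductive Sig2 : Type
  | o1 | c1 | o2 | c2
deriving DecidableEq

/-- The Dyck-2 language: the smallest language containing ε and closed under
concatenation and wrapping in either kind of matching brackets. -/
inductive IsDyck : List Sig2 → Prop
  | nil : IsDyck []
  | append {u v : List Sig2} : IsDyck u → IsDyck v → IsDyck (u ++ v)
  | br1 {u : List Sig2} : IsDyck u → IsDyck (Sig2.o1 :: u ++ [Sig2.c1])
  | br2 {u : List Sig2} : IsDyck u → IsDyck (Sig2.o2 :: u ++ [Sig2.c2])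

/-- `IsWalk E u v p` : `p` is a walk from `u` to `v` in the graph with edge set `E`. -/
def IsWalk {V : Type} (E : Set (V × V)) : V → V → List (V × V) → Prop
  | u, v, [] => u = v
  | u, v, e :: p => e ∈ E ∧ e.1 = u ∧ IsWalk E e.2 v p

/-- A walk is valid if its labels form a Dyck-2 word. -/
def IsValidWalk {V : Type} (E : Set (V × V)) (lab : V × V → Sig2) (u v : V)
    (p : List (V × V)) : Prop :=
  IsWalk E u v p ∧ IsDyck (p.map lab)


/-- The adjacency matrix of the edges labeled `σ`:
entry `(u, v)` is `1` iff `(u,v) ∈ E` and `lab (u,v) = σ`. -/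
def adjMat {n : ℕ} (E : Finset (Fin n × Fin n)) (lab : Fin n × Fin n → Sig2)
    (σ : Sig2) : Matrix (Fin n) (Fin n) ℕ :=
  fun u v => if (u, v) ∈ E ∧ lab (u, v) = σ then 1 else 0

/-- `boolM M` replaces every nonzero entry of `M` by `1`. -/
def boolM {m : ℕ} (M : Matrix (Fin m) (Fin m) ℕ) : Matrix (Fin m) (Fin m) ℕ :=
  fun i j => if M i j = 0 then 0 else 1

/-- Entrywise order on matrices. -/
def MatLE {m : ℕ} (A B : Matrix (Fin m) (Fin m) ℕ) : Prop :=
  ∀ i j, A i j ≤ B i j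

/-- A separator for an instance of Dyck-2 reachability: a sextuple of `n × n`
matrices with entries in `{0, 1, …, n²}`, with `M_S` a `0–1` matrix, satisfying
the ten constraints of Eq. (2). -/
structure Separator {n : ℕ} (E : Finset (Fin n × Fin n))
    (lab : Fin n × Fin n → Sig2) (s t : Fin n) where
  MS : Matrix (Fin n) (Fin n) ℕ
  MSS : Matrix (Fin n) (Fin n) ℕ
  M1oS : Matrix (Fin n) (Fin n) ℕ
  M2oS : Matrix (Fin n) (Fin n) ℕ
  M1 : Matrix (Fin n) (Fin n) ℕ
  M2 : Matrix (Fin n) (Fin n) ℕ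
  entries_bounded : ∀ i j, MS i j ≤ n ^ 2 ∧ MSS i j ≤ n ^ 2 ∧ M1oS i j ≤ n ^ 2 ∧
    M2oS i j ≤ n ^ 2 ∧ M1 i j ≤ n ^ 2 ∧ M2 i j ≤ n ^ 2
  MS_bool : ∀ i j, MS i j ≤ 1
  id_le : MatLE 1 MS
  eq_M1oS : adjMat E lab Sig2.o1 * MS = M1oS
  eq_M2oS : adjMat E lab Sig2.o2 * MS = M2oS
  eq_MSS : MS * MS = MSS
  eq_M1 : M1oS * adjMat E lab Sig2.c1 = M1
  eq_M2 : M2oS * adjMat E lab Sig2.c2 = M2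
  bool_MSS : MatLE (boolM MSS) MS
  bool_M1 : MatLE (boolM M1) MS
  bool_M2 : MatLE (boolM M2) MS
  MS_st : MS s t = 0

section Aux

lemma isWalk_append {V : Type} {E : Set (V × V)} :
    ∀ {p : List (V × V)} {u v w : V} {q : List (V × V)},
      IsWalk E u v p → IsWalk E v w q → IsWalk E u w (p ++ q)
  | [], u, v, w, q, h, h2 => by
      have : u = v := h
      subst this; simpa using h2
  | e :: p, u, v, w, q, h, h2 => by
      obtain ⟨hE, h1, hrest⟩ := h
      exact ⟨hE, h1, isWalk_append hrest h2⟩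

lemma valid_comp {V : Type} {E : Set (V × V)} {lab : V × V → Sig2} {u v w : V}
    {p q : List (V × V)} (h1 : IsValidWalk E lab u v p)
    (h2 : IsValidWalk E lab v w q) : IsValidWalk E lab u w (p ++ q) :=
  ⟨isWalk_append h1.1 h2.1, by rw [List.map_append]; exact h1.2.append h2.2⟩

lemma valid_wrap1 {V : Type} {E : Set (V × V)} {lab : V × V → Sig2} {u a b v : V}
    {q : List (V × V)}
    (he : (u, a) ∈ E) (hl : lab (u, a) = Sig2.o1)
    (h : IsValidWalk E lab a b q)
    (he' : (b, v) ∈ E) (hl' : lab (b, v) = Sig2.c1) :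
    IsValidWalk E lab u v ((u, a) :: (q ++ [(b, v)])) := by
  refine ⟨⟨he, rfl, isWalk_append h.1 ⟨he', rfl, rfl⟩⟩, ?_⟩
  have heq : List.map lab ((u, a) :: (q ++ [(b, v)]))
      = Sig2.o1 :: (List.map lab q ++ [Sig2.c1]) := by
    simp [hl, hl']
  rw [heq]; exact h.2.br1

lemma valid_wrap2 {V : Type} {E : Set (V × V)} {lab : V × V → Sig2} {u a b v : V}
    {q : List (V × V)}
    (he : (u, a) ∈ E) (hl : lab (u, a) = Sig2.o2)
    (h : IsValidWalk E lab a b q)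
    (he' : (b, v) ∈ E) (hl' : lab (b, v) = Sig2.c2) :
    IsValidWalk E lab u v ((u, a) :: (q ++ [(b, v)])) := by
  refine ⟨⟨he, rfl, isWalk_append h.1 ⟨he', rfl, rfl⟩⟩, ?_⟩
  have heq : List.map lab ((u, a) :: (q ++ [(b, v)]))
      = Sig2.o2 :: (List.map lab q ++ [Sig2.c2]) := by
    simp [hl, hl']
  rw [heq]; exact h.2.br2

end Aux
/-- Every no-instance of Dyck-2 reachability has a separator. -/
theorem exists_separator_of_no_validWalk
    {n : ℕ} (E : Finset (Fin n × Fin n)) (lab : Fin n × Fin n → Sig2)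
    (s t : Fin n)
    (hno : ¬ ∃ p : List (Fin n × Fin n), IsValidWalk (↑E) lab s t p) :
    Nonempty (Separator E lab s t) := by
  classical
  set R : Fin n → Fin n → Prop := fun u v => ∃ p, IsValidWalk (↑E) lab u v p with hR
  set MS : Matrix (Fin n) (Fin n) ℕ := fun u v => if R u v then 1 else 0 with hMS
  set A1 := adjMat E lab Sig2.o1
  set A2 := adjMat E lab Sig2.o2
  set C1 := adjMat E lab Sig2.c1
  set C2 := adjMat E lab Sig2.c2
  have hMS1 : ∀ i j, MS i j ≤ 1 := by
    intro i j; simp only [hMS]; split <;> simp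
  have hMSR : ∀ i j, R i j → MS i j = 1 := by
    intro i j h; simp only [hMS]; rw [if_pos h]
  have hMSne : ∀ i j, MS i j ≠ 0 → R i j := by
    intro i j h; by_contra hc; simp only [hMS] at h; rw [if_neg hc] at h; exact h rfl
  have hAne : ∀ σ i j, adjMat E lab σ i j ≠ 0 → (i, j) ∈ E ∧ lab (i, j) = σ := by
    intro σ i j h; by_contra hc; simp only [adjMat] at h; rw [if_neg hc] at h; exact h rfl
  have hA1 : ∀ σ i j, adjMat E lab σ i j ≤ 1 := by
    intro σ i j; simp only [adjMat]; split <;> simp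
  -- generic bound for products
  have key : ∀ (M N : Matrix (Fin n) (Fin n) ℕ) (c : ℕ),
      (∀ i j, M i j ≤ c) → (∀ i j, N i j ≤ 1) → ∀ i j, (M * N) i j ≤ n * c := by
    intro M N c hM hN i j
    rw [Matrix.mul_apply]
    calc ∑ k, M i k * N k j ≤ ∑ _k : Fin n, c := by
          refine Finset.sum_le_sum fun k _ => ?_
          calc M i k * N k j ≤ c * 1 := Nat.mul_le_mul (hM i k) (hN k j)
          _ = c := Nat.mul_one c
      _ = n * c := by simp [Finset.sum_const, Finset.card_univ, Nat.smul_one_eq_cast]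
  have hMSSb : ∀ i j, (MS * MS) i j ≤ n := by
    intro i j
    have := key MS MS 1 hMS1 hMS1 i j
    simpa using this
  have hAoSb : ∀ σ i j, (adjMat E lab σ * MS) i j ≤ n := by
    intro σ i j
    have := key (adjMat E lab σ) MS 1 (hA1 σ) hMS1 i j
    simpa using this
  have hMb : ∀ σ τ i j, (adjMat E lab σ * MS * adjMat E lab τ) i j ≤ n ^ 2 := by
    intro σ τ i j
    have := key (adjMat E lab σ * MS) (adjMat E lab τ) n (hAoSb σ) (hA1 τ) i j
    calc (adjMat E lab σ * MS * adjMat E lab τ) i j ≤ n * n := this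
      _ = n ^ 2 := (sq n).symm
  -- boolean constraints
  have bMSS : MatLE (boolM (MS * MS)) MS := by
    intro i j
    unfold boolM
    split
    · exact Nat.zero_le _
    · rename_i h
      rw [Matrix.mul_apply] at h
      obtain ⟨k, _, hk⟩ := Finset.exists_ne_zero_of_sum_ne_zero h
      rw [Nat.mul_ne_zero_iff] at hk
      obtain ⟨p, hp⟩ := hMSne _ _ hk.1
      obtain ⟨q, hq⟩ := hMSne _ _ hk.2
      rw [hMSR i j ⟨p ++ q, valid_comp hp hq⟩]
  have bM1 : MatLE (boolM (A1 * MS * C1)) MS := by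
    intro i j
    unfold boolM
    split
    · exact Nat.zero_le _
    · rename_i h
      rw [Matrix.mul_apply] at h
      obtain ⟨b, _, hb⟩ := Finset.exists_ne_zero_of_sum_ne_zero h
      rw [Nat.mul_ne_zero_iff] at hb
      obtain ⟨hbE, hbl⟩ := hAne _ _ _ hb.2
      have h2 := hb.1
      rw [Matrix.mul_apply] at h2
      obtain ⟨a, _, ha⟩ := Finset.exists_ne_zero_of_sum_ne_zero h2
      rw [Nat.mul_ne_zero_iff] at ha
      obtain ⟨haE, hal⟩ := hAne _ _ _ ha.1
      obtain ⟨q, hq⟩ := hMSne _ _ ha.2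
      rw [hMSR i j ⟨_, valid_wrap1 haE hal hq hbE hbl⟩]
  have bM2 : MatLE (boolM (A2 * MS * C2)) MS := by
    intro i j
    unfold boolM
    split
    · exact Nat.zero_le _
    · rename_i h
      rw [Matrix.mul_apply] at h
      obtain ⟨b, _, hb⟩ := Finset.exists_ne_zero_of_sum_ne_zero h
      rw [Nat.mul_ne_zero_iff] at hb
      obtain ⟨hbE, hbl⟩ := hAne _ _ _ hb.2
      have h2 := hb.1
      rw [Matrix.mul_apply] at h2
      obtain ⟨a, _, ha⟩ := Finset.exists_ne_zero_of_sum_ne_zero h2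
      rw [Nat.mul_ne_zero_iff] at ha
      obtain ⟨haE, hal⟩ := hAne _ _ _ ha.1
      obtain ⟨q, hq⟩ := hMSne _ _ ha.2
      rw [hMSR i j ⟨_, valid_wrap2 haE hal hq hbE hbl⟩]
  refine ⟨⟨MS, MS * MS, A1 * MS, A2 * MS, A1 * MS * C1, A2 * MS * C2,
    ?_, hMS1, ?_, rfl, rfl, rfl, rfl, rfl, bMSS, bM1, bM2, ?_⟩⟩
  · intro i j
    have hn : 0 < n := i.pos
    have h1 : (1 : ℕ) ≤ n ^ 2 := Nat.one_le_pow 2 n hn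
    have hnn : n ≤ n ^ 2 := Nat.le_self_pow two_ne_zero n
    exact ⟨le_trans (hMS1 i j) h1, le_trans (hMSSb i j) hnn,
      le_trans (hAoSb _ i j) hnn, le_trans (hAoSb _ i j) hnn,
      hMb _ _ i j, hMb _ _ i j⟩
  · intro i j
    rw [Matrix.one_apply]
    split
    · rename_i h
      subst h
      exact le_of_eq (hMSR i i ⟨[], rfl, IsDyck.nil⟩).symm
    · exact Nat.zero_le _
  · simp only [hMS]
    rw [if_neg]
    exact hno
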